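/- arXiv:2111.04317 — 4 statements merged into one kernel-verified Lean document; each statement's English description precedes it below -/
import Mathlib

section
/- Let u : [0,∞) → ℝ be a bounded differentiable function and let h : [0,∞) → ℝ be an integrable non-negative function such that u'(t) ≥ -h(t) for all t. Then u(t) converges as t → ∞. -/
open MeasureTheory

theorem bounded_deriv_lowerbound_converges (u u' h : ℝ → ℝ)
    (hbdd : ∃ M : ℝ, ∀ t, 0 ≤ t → |u t| ≤ M)
    (hderiv : ∀ t, 0 ≤ t → HasDerivAt u (u' t) t)
    (hintegrable : IntegrableOn h (Set.Ici 0))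
    (hnonneg : ∀ t, 0 ≤ t → 0 ≤ h t)
    (hineq : ∀ t, 0 ≤ t → u' t ≥ -h t) :
    ∃ L : ℝ, Filter.Tendsto u Filter.atTop (nhds L) := by
  obtain ⟨M, hM⟩ := hbdd
  set v : ℝ → ℝ := fun t => u t + ∫ s in (0:ℝ)..t, h s with hv
  have hii : ∀ a b : ℝ, 0 ≤ a → a ≤ b → IntervalIntegrable h volume a b := by
    intro a b ha hab
    apply IntegrableOn.intervalIntegrable
    apply hintegrable.mono_set
    rw [Set.uIcc_of_le hab]
    exact fun x hx => ha.trans hx.1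
  -- v is monotone on [0, ∞)
  have hmono : ∀ a b : ℝ, 0 ≤ a → a ≤ b → v a ≤ v b := by
    intro a b ha hab
    have key : (fun t => -u t) b - (fun t => -u t) a ≤ ∫ y in a..b, h y := by
      apply intervalIntegral.sub_le_integral_of_hasDeriv_right_of_le hab
      · intro x hx
        exact ((hderiv x (ha.trans hx.1)).continuousAt.continuousWithinAt).neg
      · intro x hx
        exact ((hderiv x (ha.trans hx.1.le)).neg).hasDerivWithinAt
      · exact hintegrable.mono_set fun x hx => ha.trans hx.1
      · intro x hx
        have := hineq x (ha.trans hx.1.le)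
        show -u' x ≤ h x
        linarith
    have hsplit : (∫ s in (0:ℝ)..a, h s) + ∫ s in a..b, h s = ∫ s in (0:ℝ)..b, h s :=
      intervalIntegral.integral_add_adjacent_intervals (hii 0 a le_rfl ha) (hii a b ha hab)
    have key2 : -u b - -u a ≤ ∫ y in a..b, h y := key
    simp only [hv]
    linarith
  -- interval integrals bounded by the improper integral
  have hIbd : ∀ a : ℝ, 0 ≤ a → (∫ s in (0:ℝ)..a, h s) ≤ ∫ s in Set.Ici (0:ℝ), h s := by
    intro a ha
    rw [intervalIntegral.integral_of_le ha]
    apply setIntegral_mono_set hintegrable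
    · filter_upwards [ae_restrict_mem measurableSet_Ici] with x hx using hnonneg x hx
    · exact Filter.Eventually.of_forall fun x hx => hx.1.le
  -- define w, monotone version of v on all of ℝ
  set w : ℝ → ℝ := fun t => v (max t 0) with hw
  have hwmono : Monotone w := fun s t hst =>
    hmono (max s 0) (max t 0) (le_max_right _ _) (max_le_max hst le_rfl)
  have hwbdd : BddAbove (Set.range w) := by
    refine ⟨M + ∫ s in Set.Ici (0:ℝ), h s, ?_⟩
    rintro _ ⟨t, rfl⟩
    have h1 := hM (max t 0) (le_max_right _ _)
    have h2 := hIbd (max t 0) (le_max_right _ _)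
    have := abs_le.mp h1
    simp only [hw, hv]
    linarith [this.2]
  have hwt : Filter.Tendsto w Filter.atTop (nhds (⨆ t, w t)) :=
    tendsto_atTop_ciSup hwmono hwbdd
  have hvt : Filter.Tendsto v Filter.atTop (nhds (⨆ t, w t)) := by
    apply hwt.congr'
    filter_upwards [Filter.eventually_ge_atTop (0:ℝ)] with t ht
    simp [hw, max_eq_left ht]
  have hinth : Filter.Tendsto (fun t => ∫ s in (0:ℝ)..t, h s) Filter.atTop
      (nhds (∫ s in Set.Ici (0:ℝ), h s)) :=
by
    rw [MeasureTheory.integral_Ici_eq_integral_Ioi]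
    exact MeasureTheory.intervalIntegral_tendsto_integral_Ioi 0
      (hintegrable.mono_set Set.Ioi_subset_Ici_self) Filter.tendsto_id
  refine ⟨(⨆ t, w t) - ∫ s in Set.Ici (0:ℝ), h s, ?_⟩
  have : u = fun t => v t - ∫ s in (0:ℝ)..t, h s := by
    funext t; simp [hv]
  rw [this]
  exact hvt.sub hinth
end

section
/- Let S be a finite set (of states), 0 < δ < 1, and for each s ∈ S let u_s, Γ_s : [0,∞) → ℝ be continuous functions with |u_s(0)| < M, |Γ_s(0)| < M. Suppose that whenever u_s(t) = M we have u_s differentiable at t with u'_s(t) = β_t α(t)(Γ_s(t) - u_s(t)) for some β_t, α(t) > 0, that whenever u_s(t) = -M the same differential relation holds, and that Γ_s(t) = (1-δ) r_s(x_s(t)) + δ ∑_{s'} P_{ss'}(x_s(t)) u_{s'}(t) where |r_s(x)| < M and P_{ss'}(x) ≥ 0 with ∑_{s'} P_{ss'}(x) = 1. Then |u_s(t)| ≤ M and |Γ_s(t)| ≤ M for all t ≥ 0 and s ∈ S. -/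
open Topology Filter Set


theorem brd_bounded
    (S : Type*) [Fintype S] (X : Type*)
    (δ M : ℝ) (hδ0 : 0 < δ) (hδ1 : δ < 1)
    (u Γ : S → ℝ → ℝ) (x : S → ℝ → X) (r : S → X → ℝ) (P : S → S → X → ℝ)
    (hu_cont : ∀ s, Continuous (u s)) (hΓ_cont : ∀ s, Continuous (Γ s))
    (hu0 : ∀ s, |u s 0| < M) (hΓ0 : ∀ s, |Γ s 0| < M)
    (hr : ∀ s ξ, |r s ξ| < M)
    (hP_nonneg : ∀ s s' ξ, 0 ≤ P s s' ξ)
    (hP_sum : ∀ s ξ, ∑ s' : S, P s s' ξ = 1)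
    (hΓ_def : ∀ s t, Γ s t =
      (1 - δ) * r s (x s t) + δ * ∑ s' : S, P s s' (x s t) * u s' t)
    (hderiv_top : ∀ s t, 0 ≤ t → u s t = M →
      ∃ β α : ℝ, 0 < β ∧ 0 < α ∧ HasDerivAt (u s) (β * α * (Γ s t - u s t)) t)
    (hderiv_bot : ∀ s t, 0 ≤ t → u s t = -M →
      ∃ β α : ℝ, 0 < β ∧ 0 < α ∧ HasDerivAt (u s) (β * α * (Γ s t - u s t)) t) :
    ∀ s t, 0 ≤ t → |u s t| ≤ M ∧ |Γ s t| ≤ M := by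

  intro s0 t0 ht0
  have hM : 0 < M := (abs_nonneg _).trans_lt (hu0 s0)
  -- Γ bound given u bounds
  have hGb : ∀ s t, (∀ s', |u s' t| ≤ M) → |Γ s t| < M := by
    intro s t h
    rw [hΓ_def]
    have h1 : |(1 - δ) * r s (x s t)| < (1 - δ) * M := by
      rw [abs_mul, abs_of_pos (by linarith : (0:ℝ) < 1 - δ)]
      exact mul_lt_mul_of_pos_left (hr _ _) (by linarith)
    have h2 : |δ * ∑ s' : S, P s s' (x s t) * u s' t| ≤ δ * M := by
      rw [abs_mul, abs_of_pos hδ0]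
      refine mul_le_mul_of_nonneg_left ?_ hδ0.le
      calc |∑ s' : S, P s s' (x s t) * u s' t|
          ≤ ∑ s' : S, |P s s' (x s t) * u s' t| := Finset.abs_sum_le_sum_abs _ _
        _ ≤ ∑ s' : S, P s s' (x s t) * M := by
            refine Finset.sum_le_sum fun s' _ => ?_
            rw [abs_mul, abs_of_nonneg (hP_nonneg s s' _)]
            exact mul_le_mul_of_nonneg_left (h s') (hP_nonneg s s' _)
        _ = M := by rw [← Finset.sum_mul, hP_sum, one_mul]
    calc |(1 - δ) * r s (x s t) + δ * ∑ s' : S, P s s' (x s t) * u s' t|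
        ≤ |(1 - δ) * r s (x s t)| + |δ * ∑ s' : S, P s s' (x s t) * u s' t| :=
          abs_add_le _ _
      _ < (1 - δ) * M + δ * M := by linarith
      _ = M := by ring
  have key : ∀ t, 0 ≤ t → ∀ s, |u s t| ≤ M := by
    by_contra hcon
    push_neg at hcon
    obtain ⟨t1, ht1, s1, hs1⟩ := hcon
    set A : Set ℝ := {t : ℝ | 0 ≤ t ∧ ∃ s, M ≤ |u s t|} with hA
    have hA_closed : IsClosed A := by
      have : A = Set.Ici (0:ℝ) ∩ ⋃ s : S, {t : ℝ | M ≤ |u s t|} := by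
        ext t; simp [hA, Set.mem_Ici]
      rw [this]
      exact isClosed_Ici.inter (isClosed_iUnion_of_finite fun s =>
        isClosed_le continuous_const ((hu_cont s).abs))
    have hA_ne : A.Nonempty := ⟨t1, ht1, s1, hs1.le⟩
    have hA_bdd : BddBelow A := ⟨0, fun t ht => ht.1⟩
    set τ := sInf A with hτ
    have hτA : τ ∈ A := hA_closed.csInf_mem hA_ne hA_bdd
    have hτ0 : 0 ≤ τ := hτA.1
    have hτpos : 0 < τ := by
      rcases hτ0.lt_or_eq with h | h
      · exact h
      · exfalso
        obtain ⟨s2, hs2⟩ := hτA.2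
        rw [← h] at hs2
        exact absurd hs2 (not_le.mpr (hu0 s2))
    have hbefore : ∀ t, 0 ≤ t → t < τ → ∀ s, |u s t| < M := by
      intro t ht htτ s
      by_contra hle
      push_neg at hle
      exact absurd (csInf_le hA_bdd ⟨ht, s, hle⟩) (not_le.mpr htτ)
    -- all u bounded at τ
    have hatτ : ∀ s, |u s τ| ≤ M := by
      intro s
      have hne : (𝓝[<] τ).NeBot := nhdsLT_neBot τ
      have htend : Filter.Tendsto (fun t => |u s t|) (𝓝[<] τ) (𝓝 |u s τ|) :=
        ((hu_cont s).abs.tendsto τ).mono_left nhdsWithin_le_nhds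
      refine le_of_tendsto htend ?_
      filter_upwards [self_mem_nhdsWithin,
        mem_nhdsWithin_of_mem_nhds (Ioi_mem_nhds hτpos)] with t ht1 ht2
      exact (hbefore t (le_of_lt ht2) ht1 s).le
    obtain ⟨s2, hs2⟩ := hτA.2
    have hseq : |u s2 τ| = M := le_antisymm (hatτ s2) hs2
    have hΓτ : |Γ s2 τ| < M := hGb s2 τ hatτ
    rcases abs_eq hM.le |>.mp hseq with htop | hbot
    · obtain ⟨β, α, hβ, hα, hd⟩ := hderiv_top s2 τ hτ0 htop
      have hdneg : β * α * (Γ s2 τ - u s2 τ) < 0 := by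
        have : Γ s2 τ < M := lt_of_le_of_lt (le_abs_self _) hΓτ
        have := mul_pos hβ hα
        nlinarith
      have hslope : Filter.Tendsto (slope (u s2) τ) (𝓝[<] τ)
          (𝓝 (β * α * (Γ s2 τ - u s2 τ))) :=
        (hasDerivAt_iff_tendsto_slope.mp hd).mono_left
          (nhdsWithin_mono τ (fun y hy => Set.mem_compl_singleton_iff.mpr (ne_of_lt hy)))
      have hev := hslope.eventually (gt_mem_nhds hdneg)
      have hne : (𝓝[<] τ).NeBot := nhdsLT_neBot τ
      have hmem : ∀ᶠ t in 𝓝[<] τ, 0 < t ∧ t < τ := by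
        filter_upwards [(mem_nhdsWithin_of_mem_nhds (Ioi_mem_nhds hτpos) :
          Set.Ioi 0 ∈ 𝓝[Set.Iio τ] τ), self_mem_nhdsWithin] with t h1 h2
        exact ⟨h1, h2⟩
      obtain ⟨t, hts, ht1, ht2⟩ := (hev.and hmem).exists
      have hlt : t < τ := ht2
      have htpos : (0:ℝ) < t := ht1
      have hub : u s2 t < M := lt_of_le_of_lt (le_abs_self _) (hbefore t htpos.le hlt s2)
      have : slope (u s2) τ t = (u s2 t - M) / (t - τ) := by
        rw [slope_def_field, htop]
      rw [this] at hts
      rcases div_neg_iff.mp hts with ⟨h1, h2⟩ | ⟨h1, h2⟩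
      · linarith
      · linarith
    · obtain ⟨β, α, hβ, hα, hd⟩ := hderiv_bot s2 τ hτ0 hbot
      have hdpos : 0 < β * α * (Γ s2 τ - u s2 τ) := by
        have : -M < Γ s2 τ := neg_lt_of_abs_lt hΓτ
        have := mul_pos hβ hα
        nlinarith
      have hslope : Filter.Tendsto (slope (u s2) τ) (𝓝[<] τ)
          (𝓝 (β * α * (Γ s2 τ - u s2 τ))) :=
        (hasDerivAt_iff_tendsto_slope.mp hd).mono_left
          (nhdsWithin_mono τ (fun y hy => Set.mem_compl_singleton_iff.mpr (ne_of_lt hy)))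
      have hev := hslope.eventually (lt_mem_nhds hdpos)
      have hne : (𝓝[<] τ).NeBot := nhdsLT_neBot τ
      have hmem : ∀ᶠ t in 𝓝[<] τ, 0 < t ∧ t < τ := by
        filter_upwards [(mem_nhdsWithin_of_mem_nhds (Ioi_mem_nhds hτpos) :
          Set.Ioi 0 ∈ 𝓝[Set.Iio τ] τ), self_mem_nhdsWithin] with t h1 h2
        exact ⟨h1, h2⟩
      obtain ⟨t, hts, ht1, ht2⟩ := (hev.and hmem).exists
      have hlt : t < τ := ht2
      have htpos : (0:ℝ) < t := ht1
      have hub : -M < u s2 t := neg_lt_of_abs_lt (hbefore t htpos.le hlt s2)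
      have : slope (u s2) τ t = (u s2 t - (-M)) / (t - τ) := by
        rw [slope_def_field, hbot]
      rw [this] at hts
      rcases div_pos_iff.mp hts with ⟨h1, h2⟩ | ⟨h1, h2⟩
      · linarith
      · linarith
  exact ⟨key t0 ht0 s0, (hGb s0 t0 (key t0 ht0)).le⟩
end

section
/- Let u, Γ : [0,∞) → ℝ be functions with u differentiable satisfying u'(t) = α(t)(Γ(t) - u(t)), where α is continuous, positive, non-increasing with divergent integral. If Γ(t) converges to a limit L as t → ∞ and u is bounded, then u(t) → L as t → ∞. -/
/-!
With `A` a primitive of `α`, the equation `u' = α (Γ - u)` says that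
`(exp A * (u - c))' = exp A * α * (Γ - c)`. Once `Γ ≤ c` on `[T, ∞)`, the function
`exp A * (u - c)` is therefore non-increasing there, so `u t - c ≤ K * exp (-A t)`, which
tends to `0` because `∫₀^∞ α = ∞`. Applied to `u` and to `-u` with `c` close to `L`, this
squeezes `u` towards `L`.
-/

open Filter Set Real Topology

lemma antitoneOn_exp_mul_sub_of_le {u Γ α A : ℝ → ℝ} {c T : ℝ}
    (hA : ∀ t ∈ Ici T, HasDerivAt A (α t) t) (hα : ∀ t ∈ Ici T, 0 ≤ α t)
    (hu : ∀ t ∈ Ici T, HasDerivAt u (α t * (Γ t - u t)) t) (hΓ : ∀ t ∈ Ici T, Γ t ≤ c) :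
    AntitoneOn (fun t => exp (A t) * (u t - c)) (Ici T) := by
  have hderiv : ∀ t ∈ Ici T, HasDerivAt (fun t => exp (A t) * (u t - c))
      (exp (A t) * (α t * (Γ t - c))) t := fun t ht =>
    ((hA t ht).exp.mul ((hu t ht).sub_const c)).congr_deriv (by ring)
  refine antitoneOn_of_hasDerivWithinAt_nonpos (convex_Ici T)
    (fun t ht => (hderiv t ht).continuousAt.continuousWithinAt)
    (fun t ht => (hderiv t (interior_subset ht)).hasDerivWithinAt) fun t ht => ?_
  replace ht := interior_subset ht
  exact mul_nonpos_of_nonneg_of_nonpos (exp_pos _).le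
    (mul_nonpos_of_nonneg_of_nonpos (hα t ht) (sub_nonpos.2 (hΓ t ht)))

lemma eventually_lt_of_eventually_le {u Γ α A : ℝ → ℝ} {c d : ℝ} (hcd : c < d)
    (hA_top : Tendsto A atTop atTop) (hA : ∀ᶠ t in atTop, HasDerivAt A (α t) t)
    (hα : ∀ᶠ t in atTop, 0 ≤ α t) (hu : ∀ᶠ t in atTop, HasDerivAt u (α t * (Γ t - u t)) t)
    (hΓ : ∀ᶠ t in atTop, Γ t ≤ c) :
    ∀ᶠ t in atTop, u t < d := by
  obtain ⟨T, hT⟩ := eventually_atTop.1 (hA.and (hα.and (hu.and hΓ)))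
  have hanti := antitoneOn_exp_mul_sub_of_le (fun t ht => (hT t ht).1)
    (fun t ht => (hT t ht).2.1) (fun t ht => (hT t ht).2.2.1) (fun t ht => (hT t ht).2.2.2)
  set K := exp (A T) * (u T - c)
  have hdecay : Tendsto (fun t => K * exp (-A t)) atTop (𝓝 0) := by
    simpa only [Function.comp_def, mul_zero] using (tendsto_exp_neg_atTop_nhds_zero.comp hA_top).const_mul K
  filter_upwards [eventually_ge_atTop T, hdecay.eventually (gt_mem_nhds (sub_pos.2 hcd))]
    with t ht hsmall
  have hbound : exp (A t) * (u t - c) ≤ K := hanti self_mem_Ici ht ht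
  have : u t - c ≤ K * exp (-A t) := by
    rw [exp_neg, ← div_eq_mul_inv, le_div_iff₀ (exp_pos _)]
    linarith
  linarith

lemma eventually_gt_of_eventually_ge {u Γ α A : ℝ → ℝ} {c d : ℝ} (hdc : d < c)
    (hA_top : Tendsto A atTop atTop) (hA : ∀ᶠ t in atTop, HasDerivAt A (α t) t)
    (hα : ∀ᶠ t in atTop, 0 ≤ α t) (hu : ∀ᶠ t in atTop, HasDerivAt u (α t * (Γ t - u t)) t)
    (hΓ : ∀ᶠ t in atTop, c ≤ Γ t) :
    ∀ᶠ t in atTop, d < u t := by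
  have hneg := eventually_lt_of_eventually_le (u := fun t => -u t) (Γ := fun t => -Γ t)
    (neg_lt_neg hdc) hA_top hA hα
    (hu.mono fun t ht => ht.neg.congr_deriv (by ring))
    (hΓ.mono fun t ht => neg_le_neg ht)
  exact hneg.mono fun t ht => neg_lt_neg_iff.1 ht

theorem tracking_limit_general (u Γ α : ℝ → ℝ) (L : ℝ)
    (hα_cont : Continuous α) (hα_pos : ∀ t, 0 ≤ t → 0 < α t)
    (hα_div : Filter.Tendsto (fun t => ∫ s in (0:ℝ)..t, α s) Filter.atTop Filter.atTop)
    (hu_deriv : ∀ t, 0 ≤ t → HasDerivAt u (α t * (Γ t - u t)) t)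
    (hΓ : Filter.Tendsto Γ Filter.atTop (nhds L)) :
    Filter.Tendsto u Filter.atTop (nhds L) := by
  have hA : ∀ᶠ t in atTop, HasDerivAt (fun t => ∫ s in (0:ℝ)..t, α s) (α t) t :=
    Eventually.of_forall fun t => (hα_cont.integral_hasStrictDerivAt 0 t).hasDerivAt
  have hα : ∀ᶠ t in atTop, 0 ≤ α t :=
    (eventually_ge_atTop 0).mono fun t ht => (hα_pos t ht).le
  have hu : ∀ᶠ t in atTop, HasDerivAt u (α t * (Γ t - u t)) t :=
    (eventually_ge_atTop 0).mono hu_deriv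
  refine tendsto_order.2 ⟨fun d hd => ?_, fun d hd => ?_⟩
  · obtain ⟨c, hdc, hcL⟩ := exists_between hd
    exact eventually_gt_of_eventually_ge hdc hα_div hA hα hu (hΓ.eventually (le_mem_nhds hcL))
  · obtain ⟨c, hLc, hcd⟩ := exists_between hd
    exact eventually_lt_of_eventually_le hcd hα_div hA hα hu (hΓ.eventually (ge_mem_nhds hLc))

theorem tracking_limit (u Γ α : ℝ → ℝ) (L : ℝ)
    (hα_cont : Continuous α) (hα_pos : ∀ t, 0 ≤ t → 0 < α t)
    (hα_mono : AntitoneOn α (Set.Ici 0))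
    (hα_div : Filter.Tendsto (fun t => ∫ s in (0:ℝ)..t, α s) Filter.atTop Filter.atTop)
    (hu_deriv : ∀ t, 0 ≤ t → HasDerivAt u (α t * (Γ t - u t)) t)
    (hu_bdd : ∃ M : ℝ, ∀ t, 0 ≤ t → |u t| ≤ M)
    (hΓ : Filter.Tendsto Γ Filter.atTop (nhds L)) :
    Filter.Tendsto u Filter.atTop (nhds L) :=
  tracking_limit_general u Γ α L hα_cont hα_pos hα_div hu_deriv hΓ
end

section
/- Let (a_n) be a non-negative sequence with ∑_{n≥1} a_n/n < ∞, and suppose there is A > 0 such that |a_{n+1} - a_n| ≤ A/n for all n ≥ 1. Then a_n → 0 as n → ∞. -/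
theorem weighted_summable_slow_increments_tendsto_zero (a : ℕ → ℝ) (A : ℝ) (hA : 0 < A)
    (ha_nonneg : ∀ n, 0 ≤ a n)
    (hsum : Summable (fun n : ℕ => a (n + 1) / ((n : ℝ) + 1)))
    (hinc : ∀ n : ℕ, 1 ≤ n → |a (n + 1) - a n| ≤ A / (n : ℝ)) :
    Filter.Tendsto a Filter.atTop (nhds 0) := by
  set f : ℕ → ℝ := fun n : ℕ => a (n + 1) / ((n : ℝ) + 1) with hf
  have hf_nonneg : ∀ n, 0 ≤ f n := fun n => div_nonneg (ha_nonneg _) (by positivity)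
  have key : ∀ ε : ℝ, 0 < ε → ∃ N : ℕ, ∀ m ≥ N, a (m + 1) < ε := by
    intro ε hε
    set c : ℝ := ε / (2 * A) with hc
    have hc_pos : 0 < c := by positivity
    set η : ℝ := (ε / 2) * (c / (1 + c)) with hη
    have hη_pos : 0 < η := by positivity
    have htail : Filter.Tendsto (fun i : ℕ => ∑' k : ℕ, f (k + i)) Filter.atTop (nhds 0) :=
      tendsto_sum_nat_add f
    obtain ⟨M, hM⟩ := (Filter.eventually_atTop.1
      (htail.eventually (gt_mem_nhds hη_pos)))
    refine ⟨M, fun m hm => ?_⟩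
    by_contra hcon
    push_neg at hcon
    -- hcon : ε ≤ a (m + 1)
    set L : ℕ := ⌊c * ((m : ℝ) + 1)⌋₊ with hL
    have hLle : (L : ℝ) ≤ c * ((m : ℝ) + 1) := Nat.floor_le (by positivity)
    have hLge : c * ((m : ℝ) + 1) ≤ (L : ℝ) + 1 := le_of_lt (Nat.lt_floor_add_one _)
    have hm1pos : (0 : ℝ) < (m : ℝ) + 1 := by positivity
    -- Step A: increments bound
    have stepA : ∀ j : ℕ, |a (m + 1 + j) - a (m + 1)| ≤ A * j / ((m : ℝ) + 1) := by
      intro j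
      induction j with
      | zero => simp
      | succ j ih =>
        have h1 : |a (m + 1 + j + 1) - a (m + 1 + j)| ≤ A / ((m : ℝ) + 1 + j) := by
          have := hinc (m + 1 + j) (by omega)
          simpa [Nat.cast_add, add_assoc, add_comm, add_left_comm] using this
        have h2 : A / ((m : ℝ) + 1 + j) ≤ A / ((m : ℝ) + 1) := by
          apply div_le_div_of_nonneg_left hA.le hm1pos
          simp
        calc |a (m + 1 + (j + 1)) - a (m + 1)|
            = |(a (m + 1 + j + 1) - a (m + 1 + j)) + (a (m + 1 + j) - a (m + 1))| := by
              have he : m + 1 + (j + 1) = m + 1 + j + 1 := by omega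
              rw [he]; congr 1; ring
          _ ≤ |a (m + 1 + j + 1) - a (m + 1 + j)| + |a (m + 1 + j) - a (m + 1)| := abs_add_le _ _
          _ ≤ A / ((m : ℝ) + 1) + A * j / ((m : ℝ) + 1) := add_le_add (h1.trans h2) ih
          _ = A * ((j : ℕ) + 1 : ℕ) / ((m : ℝ) + 1) := by push_cast; ring
      -- Step A': for j ≤ L, a (m + 1 + j) ≥ ε / 2
    have stepA' : ∀ j : ℕ, j ≤ L → ε / 2 ≤ a (m + 1 + j) := by
      intro j hj
      have h1 : A * (j : ℝ) / ((m : ℝ) + 1) ≤ ε / 2 := by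
        have hjL : (j : ℝ) ≤ (L : ℝ) := by exact_mod_cast hj
        have : A * (j : ℝ) / ((m : ℝ) + 1) ≤ A * (c * ((m : ℝ) + 1)) / ((m : ℝ) + 1) := by
          gcongr
          exact hjL.trans hLle
        calc A * (j : ℝ) / ((m : ℝ) + 1) ≤ A * (c * ((m : ℝ) + 1)) / ((m : ℝ) + 1) := this
          _ = A * c := by
            field_simp
          _ = ε / 2 := by rw [hc]; field_simp
      have h2 := (abs_le.1 (stepA j)).1
      linarith [hcon]
    -- Step B: block sum lower bound
    have hblock : η ≤ ∑ k ∈ Finset.range (L + 1), f (k + m) := by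
      have hterm : ∀ k ∈ Finset.range (L + 1),
          (ε / 2) / ((m : ℝ) + 1 + L) ≤ f (k + m) := by
        intro k hk
        rw [Finset.mem_range] at hk
        have hk' : k ≤ L := by omega
        have hnum : ε / 2 ≤ a (k + m + 1) := by
          have := stepA' k hk'
          have he : m + 1 + k = k + m + 1 := by omega
          rwa [he] at this
        have hden : ((k : ℝ) + m) + 1 ≤ (m : ℝ) + 1 + L := by
          have : (k : ℝ) ≤ (L : ℝ) := by exact_mod_cast hk'
          linarith
        have hdpos : (0 : ℝ) < ((k : ℝ) + m) + 1 := by positivity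
        calc (ε / 2) / ((m : ℝ) + 1 + L) ≤ (ε / 2) / (((k : ℝ) + m) + 1) :=
              div_le_div_of_nonneg_left (by positivity) hdpos hden
          _ ≤ a (k + m + 1) / (((k : ℝ) + m) + 1) := by gcongr
          _ = f (k + m) := by simp [hf, Nat.cast_add]
      have hsumge : ((L : ℝ) + 1) * ((ε / 2) / ((m : ℝ) + 1 + L))
          ≤ ∑ k ∈ Finset.range (L + 1), f (k + m) := by
        have := Finset.card_nsmul_le_sum (Finset.range (L + 1))
          (fun k => f (k + m)) ((ε / 2) / ((m : ℝ) + 1 + L)) hterm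
        simpa [Finset.card_range, nsmul_eq_mul, Nat.cast_add] using this
      refine le_trans ?_ hsumge
      -- η = (ε/2) * (c/(1+c)) ≤ (L+1) * ((ε/2)/(m+1+L))
      have hd1 : (0 : ℝ) < (m : ℝ) + 1 + L := by positivity
      have hratio : c / (1 + c) ≤ ((L : ℝ) + 1) / ((m : ℝ) + 1 + L) := by
        rw [div_le_div_iff₀ (by positivity) hd1]
        have h1 : c * ((m : ℝ) + 1 + L) ≤ c * ((1 + c) * ((m : ℝ) + 1)) := by
          apply mul_le_mul_of_nonneg_left _ hc_pos.le
          nlinarith [hLle]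
        have h2 : c * ((1 + c) * ((m : ℝ) + 1)) ≤ ((L : ℝ) + 1) * (1 + c) := by
          nlinarith [hLge]
        linarith
      calc η = (ε / 2) * (c / (1 + c)) := hη
        _ ≤ (ε / 2) * (((L : ℝ) + 1) / ((m : ℝ) + 1 + L)) :=
            mul_le_mul_of_nonneg_left hratio (by positivity)
        _ = ((L : ℝ) + 1) * ((ε / 2) / ((m : ℝ) + 1 + L)) := by ring
    -- Step C: block sum ≤ tail sum < η
    have hsummable : Summable (fun k => f (k + m)) := (summable_nat_add_iff m).2 hsum
    have hle : ∑ k ∈ Finset.range (L + 1), f (k + m) ≤ ∑' k, f (k + m) :=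
      Summable.sum_le_tsum _ (fun i _ => hf_nonneg _) hsummable
    have := hM m hm
    linarith
  -- conclude
  rw [Metric.tendsto_atTop]
  intro ε hε
  obtain ⟨N, hN⟩ := key ε hε
  refine ⟨N + 1, fun n hn => ?_⟩
  have hn' : a n < ε := by
    have h1 : n - 1 ≥ N := by omega
    have := hN (n - 1) h1
    have he : n - 1 + 1 = n := by omega
    rwa [he] at this
  rw [Real.dist_eq, sub_zero, abs_of_nonneg (ha_nonneg n)]
  exact hn'
end
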